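/- arXiv:2208.11154 — 3 statements merged into one kernel-verified Lean document; each statement's English description precedes it below -/
import Mathlib

section
/- The function v : ℂ → ℝ defined by v(x + iy) = max{exp(πx)·cos(πy) − 1, 0} if x > 0 and |y| < 1/2, and v(x + iy) = 0 otherwise, is subharmonic on ℂ. -/
open Real Complex

/-- A function `u : ℂ → ℝ` is subharmonic if it is upper semicontinuous and satisfies
the sub-mean value inequality on every disc. -/
def Subharmonic (u : ℂ → ℝ) : Prop :=
  UpperSemicontinuous u ∧
    ∀ z : ℂ, ∀ r : ℝ, 0 < r →
      u z ≤ (1 / (2 * Real.pi)) *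
        ∫ t in (0 : ℝ)..(2 * Real.pi), u (z + r * Complex.exp (Complex.I * t))

noncomputable def vfun (z : ℂ) : ℝ :=
  if 0 < z.re ∧ |z.im| < 1 / 2 then
    max (Real.exp (Real.pi * z.re) * Real.cos (Real.pi * z.im) - 1) 0
  else 0

/-!
Write `c(s) = cos (π s)` for `|s| ≤ 1/2` and `c(s) = 0` otherwise, and `G(x + iy) = e^{πx} c(y)`.
Then `v = max (G - 1) 0`, and taking a maximum or subtracting a constant preserves the sub-mean
value inequality, so it suffices to prove it for `G`. Off the strip `G` vanishes. At a centre
`z = x + iy` with `|y| ≤ 1/2`, the mean of `G` over the circle of radius `ρ` is nondecreasing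
in `ρ`: its derivative is the integral of the radial derivative of `G`, computed off the
finitely many points of the circle on the lines `|Im w| = 1/2`. Subtracting the `θ`-derivative
of the periodic function `ρ⁻¹ e^{π Re w} χ(Im w)`, with `χ` a primitive of `π c`, leaves
`e^{π Re w} sin θ (c' + π χ)(Im w)`, which is nonnegative.
-/

open MeasureTheory Metric Set Filter Topology intervalIntegral

/-- Equal to `cos (π s)` for `|s| ≤ 1/2` and to `0` otherwise: the line `π (1/2 - |s|)` lies
above the cosine on the strip and is negative off it. -/
noncomputable def cosBump (s : ℝ) : ℝ :=
  max (min (Real.cos (π * s)) (π * (1 / 2 - |s|))) 0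

lemma cosBump_nonneg (s : ℝ) : 0 ≤ cosBump s := le_max_right _ _

lemma cosBump_le_one (s : ℝ) : cosBump s ≤ 1 :=
  max_le ((min_le_left _ _).trans (Real.cos_le_one _)) zero_le_one

lemma cosBump_of_abs_le {s : ℝ} (hs : |s| ≤ 1 / 2) : cosBump s = Real.cos (π * s) := by
  have hcos : Real.cos (π * s) = Real.sin (π / 2 - π * |s|) := by
    rw [Real.sin_pi_div_two_sub, ← Real.cos_abs, abs_mul, abs_of_pos pi_pos]
  have hle : Real.cos (π * s) ≤ π * (1 / 2 - |s|) := by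
    rw [hcos]
    linarith [Real.sin_le (x := π / 2 - π * |s|) (by nlinarith [pi_pos])]
  have hnonneg : 0 ≤ Real.cos (π * s) := by
    rw [hcos]
    exact Real.sin_nonneg_of_nonneg_of_le_pi (by nlinarith [pi_pos])
      (by nlinarith [pi_pos, abs_nonneg s])
  rw [cosBump, min_eq_left hle, max_eq_left hnonneg]

lemma cosBump_of_le_abs {s : ℝ} (hs : 1 / 2 ≤ |s|) : cosBump s = 0 :=
  max_eq_right <| (min_le_right _ _).trans <| by nlinarith [pi_pos]

lemma locallyLipschitz_cosBump : LocallyLipschitz cosBump :=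
  ((show ContDiff ℝ 1 fun s => Real.cos (π * s) by fun_prop).locallyLipschitz.min
    ((show ContDiff ℝ 1 fun u => π * (1 / 2 - u) by fun_prop).locallyLipschitz.comp
      (lipschitzWith_one_norm (E := ℝ)).locallyLipschitz)).max_const 0

@[fun_prop]
lemma continuous_cosBump : Continuous cosBump := locallyLipschitz_cosBump.continuous

noncomputable def cosBumpDeriv (s : ℝ) : ℝ :=
  if |s| < 1 / 2 then -(π * Real.sin (π * s)) else 0

@[fun_prop]
lemma measurable_cosBumpDeriv : Measurable cosBumpDeriv :=
  Measurable.ite (measurableSet_lt (by fun_prop) measurable_const) (by fun_prop) measurable_const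

lemma hasDerivAt_cosBump {s : ℝ} (hs : |s| ≠ 1 / 2) : HasDerivAt cosBump (cosBumpDeriv s) s := by
  rcases hs.lt_or_gt with hs | hs
  · have hloc : cosBump =ᶠ[𝓝 s] fun u => Real.cos (π * u) :=
      (continuous_abs.continuousAt.eventually_lt continuousAt_const hs).mono
        fun u hu => cosBump_of_abs_le hu.le
    rw [cosBumpDeriv, if_pos hs]
    exact (((hasDerivAt_id s).const_mul π).cos.congr_of_eventuallyEq hloc).congr_deriv
      (by simp [mul_comm])
  · have hloc : cosBump =ᶠ[𝓝 s] fun _ => 0 :=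
      (continuousAt_const.eventually_lt continuous_abs.continuousAt hs).mono
        fun u hu => cosBump_of_le_abs hu.le
    rw [cosBumpDeriv, if_neg hs.not_gt]
    exact (hasDerivAt_const s 0).congr_of_eventuallyEq hloc

noncomputable def cosBumpPrimitive (s : ℝ) : ℝ := ∫ τ in (0 : ℝ)..s, π * cosBump τ

lemma hasDerivAt_cosBumpPrimitive (s : ℝ) : HasDerivAt cosBumpPrimitive (π * cosBump s) s :=
  ((continuous_const.mul continuous_cosBump).integral_hasStrictDerivAt 0 s).hasDerivAt

@[fun_prop]
lemma continuous_cosBumpPrimitive : Continuous cosBumpPrimitive :=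
  continuous_iff_continuousAt.2 fun s => (hasDerivAt_cosBumpPrimitive s).continuousAt

lemma cosBumpPrimitive_of_abs_le {s : ℝ} (hs : |s| ≤ 1 / 2) :
    cosBumpPrimitive s = Real.sin (π * s) := by
  have hcongr : EqOn (fun τ => π * cosBump τ) (fun τ => π * Real.cos (π * τ)) (uIcc 0 s) :=
    fun τ hτ => by
      have hτ' := uIcc_subset_Icc (by norm_num : (0 : ℝ) ∈ Icc (-(1 / 2)) (1 / 2)) (abs_le.1 hs) hτ
      simp only [cosBump_of_abs_le (abs_le.2 hτ')]
  have hderiv (τ : ℝ) : HasDerivAt (fun u => Real.sin (π * u)) (π * Real.cos (π * τ)) τ :=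
    (((hasDerivAt_id τ).const_mul π).sin).congr_deriv (by simp [mul_comm])
  rw [cosBumpPrimitive, integral_congr hcongr,
    integral_eq_sub_of_hasDerivAt (fun τ _ => hderiv τ)
      ((by fun_prop : Continuous _).intervalIntegrable _ _)]
  simp

lemma cosBumpPrimitive_add_integral (a b : ℝ) :
    cosBumpPrimitive a + ∫ τ in a..b, π * cosBump τ = cosBumpPrimitive b :=
  integral_add_adjacent_intervals ((continuous_const.mul continuous_cosBump).intervalIntegrable _ _)
    ((continuous_const.mul continuous_cosBump).intervalIntegrable _ _)

lemma integral_cosBump_eq_zero {a b : ℝ} (h : ∀ τ ∈ uIcc a b, 1 / 2 ≤ |τ|) :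
    ∫ τ in a..b, π * cosBump τ = 0 := by
  rw [integral_congr (g := fun _ => 0) fun τ hτ => by simp [cosBump_of_le_abs (h τ hτ)],
    intervalIntegral.integral_zero]

lemma cosBumpPrimitive_of_half_le {s : ℝ} (hs : 1 / 2 ≤ s) : cosBumpPrimitive s = 1 := by
  rw [← cosBumpPrimitive_add_integral (1 / 2), integral_cosBump_eq_zero, cosBumpPrimitive_of_abs_le]
  · rw [mul_one_div, Real.sin_pi_div_two, add_zero]
  · norm_num [abs_of_pos]
  · intro τ hτ
    rw [uIcc_of_le hs] at hτ
    exact hτ.1.trans (le_abs_self τ)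

lemma cosBumpPrimitive_of_le_neg_half {s : ℝ} (hs : s ≤ -(1 / 2)) : cosBumpPrimitive s = -1 := by
  rw [← cosBumpPrimitive_add_integral (-(1 / 2)), integral_cosBump_eq_zero,
    cosBumpPrimitive_of_abs_le]
  · rw [mul_neg, mul_one_div, Real.sin_neg, Real.sin_pi_div_two, add_zero]
  · norm_num [abs_of_pos]
  · intro τ hτ
    rw [uIcc_of_ge hs] at hτ
    exact (le_neg.1 hτ.2).trans (neg_le_abs τ)

/-- `c' + π χ` is a primitive of `c'' + π² c = π (δ_{-1/2} + δ_{1/2})`: it vanishes on the open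
strip and equals `±π` beyond it. -/
lemma mul_cosBumpDeriv_add_primitive_nonneg {y : ℝ} (hy : |y| ≤ 1 / 2) (s : ℝ) :
    0 ≤ (s - y) * (cosBumpDeriv s + π * cosBumpPrimitive s) := by
  rcases lt_or_ge |s| (1 / 2) with hs | hs
  · rw [cosBumpDeriv, if_pos hs, cosBumpPrimitive_of_abs_le hs.le]
    simp
  rw [cosBumpDeriv, if_neg hs.not_gt, zero_add]
  obtain ⟨hy₁, hy₂⟩ := abs_le.1 hy
  rcases le_abs'.1 hs with hs | hs
  · rw [cosBumpPrimitive_of_le_neg_half hs]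
    nlinarith [pi_pos]
  · rw [cosBumpPrimitive_of_half_le hs]
    nlinarith [pi_pos]

lemma countable_setOf_sin_eq (a : ℝ) : {t : ℝ | Real.sin t = a}.Countable := by
  refine ((countable_range fun k : ℤ => Real.arcsin a + k * (2 * π)).union
    (countable_range fun k : ℤ => (2 * k + 1) * π - Real.arcsin a)).mono fun t ht => ?_
  have ht : Real.sin t = a := ht
  have hsin : Real.sin (Real.arcsin a) = Real.sin t := by
    rw [← ht]
    exact Real.sin_arcsin (Real.neg_one_le_sin t) (Real.sin_le_one t)
  obtain ⟨k, hk | hk⟩ := Real.sin_eq_sin_iff.1 hsin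
  · exact Or.inl ⟨k, by rw [hk]; ring⟩
  · exact Or.inr ⟨k, hk.symm⟩

lemma circleMap_re (c : ℂ) (R θ : ℝ) : (circleMap c R θ).re = c.re + R * Real.cos θ := by
  simp [circleMap]

lemma circleMap_im (c : ℂ) (R θ : ℝ) : (circleMap c R θ).im = c.im + R * Real.sin θ := by
  simp [circleMap]

lemma ae_circleMap_im_ne (c : ℂ) {R : ℝ} (hR : R ≠ 0) (b : ℝ) :
    ∀ᵐ θ : ℝ, (circleMap c R θ).im ≠ b := by
  refine measure_mono_null (fun θ hθ => ?_)
    ((countable_setOf_sin_eq ((b - c.im) / R)).measure_zero volume)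
  have hθ : c.im + R * Real.sin θ = b := by simpa [circleMap_im] using hθ
  show Real.sin θ = (b - c.im) / R
  rw [← hθ]
  field_simp
  ring

noncomputable def expCosBump (w : ℂ) : ℝ := Real.exp (π * w.re) * cosBump w.im

lemma expCosBump_nonneg (w : ℂ) : 0 ≤ expCosBump w :=
  mul_nonneg (Real.exp_pos _).le (cosBump_nonneg _)

lemma locallyLipschitz_expCosBump : LocallyLipschitz expCosBump :=
  (show ContDiff ℝ 1 fun p : ℝ × ℝ => p.1 * p.2 from contDiff_mul).locallyLipschitz.comp
    ((Real.contDiff_exp.comp (contDiff_const.mul Complex.reCLM.contDiff)).locallyLipschitz.prodMk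
      (locallyLipschitz_cosBump.comp Complex.imCLM.lipschitz.locallyLipschitz))

lemma continuous_expCosBump : Continuous expCosBump := locallyLipschitz_expCosBump.continuous

lemma exists_lipschitzOnWith_expCosBump_circleMap (c : ℂ) (R : ℝ) :
    ∃ K, ∀ θ, LipschitzOnWith K (fun r => expCosBump (circleMap c r θ)) (ball 0 R) := by
  obtain ⟨K, hK⟩ := locallyLipschitz_expCosBump.locallyLipschitzOn.exists_lipschitzOnWith_of_compact
    (isCompact_closedBall c R)
  refine ⟨K, fun θ => ?_⟩
  have hradius : LipschitzWith 1 fun r : ℝ => circleMap c r θ :=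
    LipschitzWith.of_dist_le_mul fun r₁ r₂ => by
      simp [circleMap, dist_eq_norm, ← sub_mul, ← Complex.ofReal_sub]
  have hmaps : MapsTo (fun r : ℝ => circleMap c r θ) (ball 0 R) (closedBall c R) := fun r hr => by
    rw [mem_closedBall, dist_eq_norm, circleMap_sub_center, norm_circleMap_zero]
    simpa using (mem_ball_zero_iff.1 hr).le
  have h := hK.comp hradius.lipschitzOnWith hmaps
  rw [mul_one] at h
  exact h

noncomputable def expCosBumpRadialDeriv (c : ℂ) (R θ : ℝ) : ℝ :=
  Real.exp (π * (circleMap c R θ).re) *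
    (π * Real.cos θ * cosBump (circleMap c R θ).im +
      Real.sin θ * cosBumpDeriv (circleMap c R θ).im)

lemma hasDerivAt_expCosBump_circleMap {c : ℂ} {R θ : ℝ} (h : |(circleMap c R θ).im| ≠ 1 / 2) :
    HasDerivAt (fun r => expCosBump (circleMap c r θ)) (expCosBumpRadialDeriv c R θ) R := by
  simp only [expCosBump, expCosBumpRadialDeriv, circleMap_re, circleMap_im] at h ⊢
  have hre : HasDerivAt (fun r => π * (c.re + r * Real.cos θ)) (π * Real.cos θ) R := by
    simpa using (((hasDerivAt_id R).mul_const (Real.cos θ)).const_add c.re).const_mul π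
  have him : HasDerivAt (fun r => c.im + r * Real.sin θ) (Real.sin θ) R := by
    simpa using ((hasDerivAt_id R).mul_const (Real.sin θ)).const_add c.im
  refine (hre.exp.mul ((hasDerivAt_cosBump h).comp R him)).congr_deriv ?_
  simp only [Function.comp_apply]
  ring

lemma hasDerivAt_integral_expCosBump_circleMap (c : ℂ) {R : ℝ} (hR : R ≠ 0) :
    IntervalIntegrable (expCosBumpRadialDeriv c R) volume 0 (2 * π) ∧
      HasDerivAt (fun r => ∫ θ in 0..2 * π, expCosBump (circleMap c r θ))
        (∫ θ in 0..2 * π, expCosBumpRadialDeriv c R θ) R := by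
  obtain ⟨K, hK⟩ := exists_lipschitzOnWith_expCosBump_circleMap c (|R| + 1)
  have hdiff : ∀ᵐ θ : ℝ, |(circleMap c R θ).im| ≠ 1 / 2 := by
    filter_upwards [ae_circleMap_im_ne c hR (1 / 2), ae_circleMap_im_ne c hR (-(1 / 2))]
      with θ h₁ h₂ habs
    rcases (abs_eq (by norm_num)).1 habs with h | h
    exacts [h₁ h, h₂ h]
  refine hasDerivAt_integral_of_dominated_loc_of_lip (bound := fun _ => K)
    (isOpen_ball.mem_nhds ?_)
    (Eventually.of_forall fun r =>
      (continuous_expCosBump.comp (continuous_circleMap c r)).aestronglyMeasurable)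
    ((continuous_expCosBump.comp (continuous_circleMap c R)).intervalIntegrable _ _)
    ?_ (Eventually.of_forall fun θ _ => by simpa using hK θ) intervalIntegrable_const
    (hdiff.mono fun θ hθ _ => hasDerivAt_expCosBump_circleMap hθ)
  · simp
  · refine Measurable.aestronglyMeasurable ?_
    unfold expCosBumpRadialDeriv
    fun_prop

lemma integral_expCosBumpRadialDeriv_nonneg {c : ℂ} (hc : |c.im| ≤ 1 / 2) {R : ℝ} (hR : 0 < R)
    (hint : IntervalIntegrable (expCosBumpRadialDeriv c R) volume 0 (2 * π)) :
    0 ≤ ∫ θ in 0..2 * π, expCosBumpRadialDeriv c R θ := by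
  set conjDeriv : ℝ → ℝ := fun θ => Real.exp (π * (circleMap c R θ).re) *
    (π * Real.cos θ * cosBump (circleMap c R θ).im -
      π * Real.sin θ * cosBumpPrimitive (circleMap c R θ).im)
  have hconj (θ : ℝ) : HasDerivAt (fun θ => R⁻¹ * (Real.exp (π * (circleMap c R θ).re) *
      cosBumpPrimitive (circleMap c R θ).im)) (conjDeriv θ) θ := by
    simp only [conjDeriv, circleMap_re, circleMap_im]
    have hre : HasDerivAt (fun θ => π * (c.re + R * Real.cos θ)) (π * (R * -Real.sin θ)) θ :=
      (((Real.hasDerivAt_cos θ).const_mul R).const_add c.re).const_mul π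
    have him : HasDerivAt (fun θ => c.im + R * Real.sin θ) (R * Real.cos θ) θ :=
      ((Real.hasDerivAt_sin θ).const_mul R).const_add c.im
    refine ((hre.exp.mul ((hasDerivAt_cosBumpPrimitive _).comp θ him)).const_mul R⁻¹).congr_deriv ?_
    simp only [Function.comp_apply]
    field_simp
    ring
  have hperiodic : ∫ θ in 0..2 * π, conjDeriv θ = 0 := by
    rw [integral_eq_sub_of_hasDerivAt (fun θ _ => hconj θ)
      ((by fun_prop : Continuous conjDeriv).intervalIntegrable _ _)]
    simp [← periodic_circleMap c R 0]
  have hle (θ : ℝ) : conjDeriv θ ≤ expCosBumpRadialDeriv c R θ := by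
    have hdefect := mul_cosBumpDeriv_add_primitive_nonneg hc (circleMap c R θ).im
    have hradial : (circleMap c R θ).im - c.im = R * Real.sin θ := by
      rw [circleMap_im, add_sub_cancel_left]
    rw [hradial, mul_assoc] at hdefect
    have hsign := (mul_nonneg_iff_of_pos_left hR).1 hdefect
    rw [← sub_nonneg]
    calc 0 ≤ Real.exp (π * (circleMap c R θ).re) * (Real.sin θ *
          (cosBumpDeriv (circleMap c R θ).im + π * cosBumpPrimitive (circleMap c R θ).im)) :=
          mul_nonneg (Real.exp_pos _).le hsign
      _ = expCosBumpRadialDeriv c R θ - conjDeriv θ := by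
          simp only [expCosBumpRadialDeriv, conjDeriv, circleMap_im]
          ring
  calc 0 = ∫ θ in 0..2 * π, conjDeriv θ := hperiodic.symm
    _ ≤ ∫ θ in 0..2 * π, expCosBumpRadialDeriv c R θ :=
      integral_mono_on (by positivity) ((by fun_prop : Continuous conjDeriv).intervalIntegrable _ _)
        hint fun θ _ => hle θ

lemma monotoneOn_circleAverage_expCosBump {c : ℂ} (hc : |c.im| ≤ 1 / 2) :
    MonotoneOn (circleAverage expCosBump c) (Ici 0) := by
  refine monotoneOn_of_hasDerivWithinAt_nonneg (convex_Ici 0)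
    continuous_expCosBump.circleAverage.continuousOn
    (f' := fun R => (2 * π)⁻¹ * ∫ θ in 0..2 * π, expCosBumpRadialDeriv c R θ) ?_ ?_
  all_goals
    rw [interior_Ici]
    intro R hR
  · exact ((hasDerivAt_integral_expCosBump_circleMap c (ne_of_gt hR)).2.const_mul
      (2 * π)⁻¹).hasDerivWithinAt
  · exact mul_nonneg (by positivity) (integral_expCosBumpRadialDeriv_nonneg hc hR
      (hasDerivAt_integral_expCosBump_circleMap c (ne_of_gt hR)).1)

lemma expCosBump_le_circleAverage (c : ℂ) {R : ℝ} (hR : 0 ≤ R) :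
    expCosBump c ≤ circleAverage expCosBump c R := by
  rcases le_or_gt |c.im| (1 / 2) with hc | hc
  · simpa using monotoneOn_circleAverage_expCosBump hc (mem_Ici.2 le_rfl) hR hR
  · rw [expCosBump, cosBump_of_le_abs hc.le, mul_zero]
    exact circleAverage_nonneg_of_nonneg fun w _ => expCosBump_nonneg w

lemma subharmonic_iff_circleAverage {u : ℂ → ℝ} :
    Subharmonic u ↔ UpperSemicontinuous u ∧ ∀ z r, 0 < r → u z ≤ circleAverage u z r := by
  simp only [Subharmonic, circleAverage_def, circleMap, smul_eq_mul, one_div, mul_comm I]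

protected lemma Subharmonic.max {u w : ℂ → ℝ} (hu : Subharmonic u) (hw : Subharmonic w)
    (huc : Continuous u) (hwc : Continuous w) : Subharmonic fun z => max (u z) (w z) := by
  rw [subharmonic_iff_circleAverage] at *
  have hint (z : ℂ) (r : ℝ) : CircleIntegrable (fun z => max (u z) (w z)) z r :=
    (huc.max hwc).continuousOn.circleIntegrable'
  refine ⟨(huc.max hwc).upperSemicontinuous, fun z r hr => max_le ?_ ?_⟩
  · exact (hu.2 z r hr).trans <| circleAverage_mono huc.continuousOn.circleIntegrable' (hint z r)
      fun _ _ => le_max_left _ _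
  · exact (hw.2 z r hr).trans <| circleAverage_mono hwc.continuousOn.circleIntegrable' (hint z r)
      fun _ _ => le_max_right _ _

lemma Subharmonic.sub_const {u : ℂ → ℝ} (hu : Subharmonic u) (huc : Continuous u) (a : ℝ) :
    Subharmonic fun z => u z - a := by
  rw [subharmonic_iff_circleAverage] at *
  refine ⟨(huc.sub continuous_const).upperSemicontinuous, fun z r hr => ?_⟩
  rw [circleAverage_fun_sub huc.continuousOn.circleIntegrable' (circleIntegrable_const a z r),
    circleAverage_const]
  exact sub_le_sub_right (hu.2 z r hr) a

lemma subharmonic_const (a : ℝ) : Subharmonic fun _ => a :=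
  subharmonic_iff_circleAverage.2
    ⟨continuous_const.upperSemicontinuous, fun z r _ => (circleAverage_const a z r).ge⟩

lemma subharmonic_expCosBump : Subharmonic expCosBump :=
  subharmonic_iff_circleAverage.2 ⟨continuous_expCosBump.upperSemicontinuous,
    fun z _ hr => expCosBump_le_circleAverage z hr.le⟩

lemma expCosBump_le_one_of_re_nonpos {w : ℂ} (hw : w.re ≤ 0) : expCosBump w ≤ 1 :=
  mul_le_one₀ (Real.exp_le_one_iff.2 (mul_nonpos_of_nonneg_of_nonpos pi_pos.le hw))
    (cosBump_nonneg _) (cosBump_le_one _)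

lemma vfun_eq_max (z : ℂ) : vfun z = max (expCosBump z - 1) 0 := by
  rw [vfun]
  split_ifs with h
  · rw [expCosBump, cosBump_of_abs_le h.2.le]
  refine (max_eq_right (sub_nonpos.2 ?_)).symm
  by_cases hy : |z.im| < 1 / 2
  · exact expCosBump_le_one_of_re_nonpos (not_lt.1 fun hx => h ⟨hx, hy⟩)
  · rw [expCosBump, cosBump_of_le_abs (not_lt.1 hy), mul_zero]
    exact zero_le_one

theorem stmt_6 : Subharmonic vfun := by
  rw [show vfun = fun z => max (expCosBump z - 1) 0 from funext vfun_eq_max]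
  exact (subharmonic_expCosBump.sub_const continuous_expCosBump 1).max (subharmonic_const 0)
    (continuous_expCosBump.sub continuous_const) continuous_const
end

section
/- The function b : ℂ → ℝ defined by b(x + iy) = cosh(πy)·cos(π(x − c − 1/2)) for x ∈ (c, c + 1) and b = 0 otherwise, where c ∈ ℝ is fixed, is subharmonic on ℂ. -/
/-!
After translating to `c = 0`, `b (x + i y) = sin (π · clamp₀₁ x) · cosh (π y) ≥ 0`. For `z` in the
strip (elsewhere `b z = 0`) it suffices to show that the circle integrals
`M R = ∫₀^{2π} b (z + R e^{it}) dt` increase with `R`, since `M 0 = 2π b z`. The function `b` is locally Lipschitz and smooth off the lines `x = 0, 1`, which a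
circle meets at countably many angles, so `M` can be differentiated under the integral sign.
Inside the strip `b + i b̃ = sin (π w)` with `b̃ = cos (π · clamp₀₁ x) · sinh (π y)`, so the
Cauchy–Riemann equations in polar form give `R ∂_R b = ∂_t b̃` there; outside the strip
`R ∂_R b = 0 ≥ ∂_t b̃`, because the circle leaves the strip moving away from its centre.
As `t ↦ b̃ (z + R e^{it})` is periodic, `R M' R ≥ ∫₀^{2π} ∂_t b̃ dt = 0`.
-/

open Real Complex

noncomputable def bfun (c : ℝ) (z : ℂ) : ℝ :=
  if z.re ∈ Set.Ioo c (c + 1) then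
    Real.cosh (Real.pi * z.im) * Real.cos (Real.pi * (z.re - c - 1 / 2))
  else 0

open Set MeasureTheory Filter intervalIntegral
open scoped Interval

lemma countable_setOf_cos_eq (a : ℝ) : {t : ℝ | Real.cos t = a}.Countable := by
  refine ((countable_range fun k : ℤ => 2 * k * π + Real.arccos a).union
    (countable_range fun k : ℤ => 2 * k * π - Real.arccos a)).mono fun t ht => ?_
  have ht : Real.cos t = a := ht
  have hcos : Real.cos (Real.arccos a) = Real.cos t := by
    rw [Real.cos_arccos (ht ▸ Real.neg_one_le_cos t) (ht ▸ Real.cos_le_one t), ht]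
  obtain ⟨k, hk | hk⟩ := Real.cos_eq_cos_iff.mp hcos
  exacts [Or.inl ⟨k, hk.symm⟩, Or.inr ⟨k, hk.symm⟩]

lemma Set.Countable.preimage_add_mul_cos {s : Set ℝ} (hs : s.Countable) (x : ℝ) {R : ℝ}
    (hR : R ≠ 0) : ((fun t => x + R * Real.cos t) ⁻¹' s).Countable :=
  (hs.biUnion fun a _ => countable_setOf_cos_eq ((a - x) / R)).mono fun t ht =>
    mem_biUnion (x := x + R * Real.cos t) ht (show Real.cos t = _ by field_simp; ring)

namespace StripBump

def clamp01 (x : ℝ) : ℝ := max 0 (min x 1)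

lemma clamp01_of_mem {x : ℝ} (hx : x ∈ Icc 0 1) : clamp01 x = x := by
  simp [clamp01, hx.1, hx.2]

lemma clamp01_of_nonpos {x : ℝ} (hx : x ≤ 0) : clamp01 x = 0 := by
  simp [clamp01, min_le_of_left_le hx]

lemma clamp01_of_one_le {x : ℝ} (hx : 1 ≤ x) : clamp01 x = 1 := by
  simp [clamp01, hx]

lemma lipschitzWith_clamp01 : LipschitzWith 1 clamp01 :=
  (LipschitzWith.id.min_const 1).const_max 0

@[fun_prop]
lemma continuous_clamp01 : Continuous clamp01 := lipschitzWith_clamp01.continuous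

lemma hasDerivAt_clamp01 {x : ℝ} (h₀ : x ≠ 0) (h₁ : x ≠ 1) :
    HasDerivAt clamp01 ((Ioo 0 1).indicator 1 x) x := by
  rcases lt_or_gt_of_ne h₀ with hx | hx
  · rw [indicator_of_notMem fun h => hx.not_gt h.1]
    refine (hasDerivAt_const x 0).congr_of_eventuallyEq ?_
    filter_upwards [Iio_mem_nhds hx] with y hy using clamp01_of_nonpos hy.le
  rcases lt_or_gt_of_ne h₁ with hx' | hx'
  · rw [indicator_of_mem (show x ∈ Ioo 0 1 from ⟨hx, hx'⟩)]
    refine (hasDerivAt_id x).congr_of_eventuallyEq ?_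
    filter_upwards [Ioo_mem_nhds hx hx'] with y hy using clamp01_of_mem (Ioo_subset_Icc_self hy)
  · rw [indicator_of_notMem fun h => hx'.not_gt h.2]
    refine (hasDerivAt_const x 1).congr_of_eventuallyEq ?_
    filter_upwards [Ioi_mem_nhds hx'] with y hy using clamp01_of_one_le hy.le

lemma sin_pi_mul_clamp01_of_notMem {x : ℝ} (hx : x ∉ Ioo 0 1) :
    Real.sin (π * clamp01 x) = 0 := by
  rcases le_or_gt x 0 with h | h
  · rw [clamp01_of_nonpos h, mul_zero, Real.sin_zero]
  · rw [clamp01_of_one_le (not_lt.mp fun h' => hx ⟨h, h'⟩), mul_one, Real.sin_pi]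

noncomputable def bump (x y : ℝ) : ℝ := Real.sin (π * clamp01 x) * Real.cosh (π * y)

noncomputable def bumpConj (x y : ℝ) : ℝ := Real.cos (π * clamp01 x) * Real.sinh (π * y)

lemma bump_nonneg (x y : ℝ) : 0 ≤ bump x y := by
  have h₀ : 0 ≤ clamp01 x := le_max_left _ _
  have h₁ : clamp01 x ≤ 1 := max_le zero_le_one (min_le_right _ _)
  exact mul_nonneg (sin_nonneg_of_nonneg_of_le_pi (mul_nonneg pi_pos.le h₀)
    (mul_le_of_le_one_right pi_pos.le h₁)) (cosh_pos _).le

lemma bump_of_notMem {x : ℝ} (hx : x ∉ Ioo 0 1) (y : ℝ) : bump x y = 0 := by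
  rw [bump, sin_pi_mul_clamp01_of_notMem hx, zero_mul]

lemma locallyLipschitz_uncurry_bump : LocallyLipschitz (Function.uncurry bump) := by
  have hG : ContDiff ℝ 1 fun p : ℝ × ℝ => Real.sin (π * p.1) * Real.cosh (π * p.2) := by
    fun_prop
  have hP : LocallyLipschitz fun p : ℝ × ℝ => (clamp01 p.1, p.2) :=
    ((lipschitzWith_clamp01.comp LipschitzWith.prod_fst).prodMk
      LipschitzWith.prod_snd).locallyLipschitz
  have hbump : Function.uncurry bump =
      (fun p : ℝ × ℝ => Real.sin (π * p.1) * Real.cosh (π * p.2)) ∘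
        fun p => (clamp01 p.1, p.2) :=
    rfl
  rw [hbump]
  exact hG.locallyLipschitz.comp hP

@[fun_prop]
lemma Continuous.bump {α : Type*} [TopologicalSpace α] {X Y : α → ℝ} (hX : Continuous X)
    (hY : Continuous Y) : Continuous fun a => bump (X a) (Y a) :=
  locallyLipschitz_uncurry_bump.continuous.comp₂ hX hY

section Derivatives

variable {X Y : ℝ → ℝ} {X' Y' s : ℝ}

lemma hasDerivAt_bump_comp (hX : HasDerivAt X X' s) (hY : HasDerivAt Y Y' s) (h₀ : X s ≠ 0)
    (h₁ : X s ≠ 1) :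
    HasDerivAt (fun s => bump (X s) (Y s))
      (π * ((Ioo 0 1).indicator 1 (X s) * Real.cos (π * clamp01 (X s)) * Real.cosh (π * Y s) * X'
        + Real.sin (π * clamp01 (X s)) * Real.sinh (π * Y s) * Y')) s := by
  have hu := (hasDerivAt_clamp01 h₀ h₁).comp s hX
  refine (((hu.const_mul π).sin).fun_mul ((hY.const_mul π).cosh)).congr_deriv ?_
  simp only [Function.comp_apply]
  ring

lemma hasDerivAt_bumpConj_comp (hX : HasDerivAt X X' s) (hY : HasDerivAt Y Y' s) (h₀ : X s ≠ 0)
    (h₁ : X s ≠ 1) :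
    HasDerivAt (fun s => bumpConj (X s) (Y s))
      (π * (-Real.sin (π * clamp01 (X s)) * Real.sinh (π * Y s) * X'
        + Real.cos (π * clamp01 (X s)) * Real.cosh (π * Y s) * Y')) s := by
  have hu := (hasDerivAt_clamp01 h₀ h₁).comp s hX
  refine (((hu.const_mul π).cos).fun_mul ((hY.const_mul π).sinh)).congr_deriv ?_
  by_cases hmem : X s ∈ Ioo 0 1
  · simp only [Function.comp_apply, indicator_of_mem hmem, Pi.one_apply]
    ring
  · simp only [Function.comp_apply, indicator_of_notMem hmem, sin_pi_mul_clamp01_of_notMem hmem]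
    ring

end Derivatives

variable {x y R : ℝ}

noncomputable def bumpRadialDeriv (x y R t : ℝ) : ℝ :=
  π * ((Ioo 0 1).indicator 1 (x + R * Real.cos t) * Real.cos (π * clamp01 (x + R * Real.cos t))
      * Real.cosh (π * (y + R * Real.sin t)) * Real.cos t
    + Real.sin (π * clamp01 (x + R * Real.cos t)) * Real.sinh (π * (y + R * Real.sin t))
      * Real.sin t)

noncomputable def bumpConjAngularDeriv (x y R t : ℝ) : ℝ :=
  π * (-Real.sin (π * clamp01 (x + R * Real.cos t)) * Real.sinh (π * (y + R * Real.sin t))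
      * (R * -Real.sin t)
    + Real.cos (π * clamp01 (x + R * Real.cos t)) * Real.cosh (π * (y + R * Real.sin t))
      * (R * Real.cos t))

lemma bumpConjAngularDeriv_le_mul_bumpRadialDeriv (hx : x ∈ Ioo 0 1) (t : ℝ) :
    bumpConjAngularDeriv x y R t ≤ R * bumpRadialDeriv x y R t := by
  set X := x + R * Real.cos t with hX
  have hcosh := (Real.cosh_pos (π * (y + R * Real.sin t))).le
  unfold bumpConjAngularDeriv bumpRadialDeriv
  rw [← hX]
  by_cases hin : X ∈ Ioo 0 1
  · rw [indicator_of_mem hin, Pi.one_apply]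
    exact le_of_eq (by ring)
  rw [indicator_of_notMem hin, sin_pi_mul_clamp01_of_notMem hin]
  rcases le_or_gt X 0 with hX0 | hX0
  · have hRcos : R * Real.cos t ≤ 0 := by linarith [hx.1]
    rw [clamp01_of_nonpos hX0, mul_zero, Real.cos_zero]
    linarith [mul_nonpos_of_nonneg_of_nonpos (mul_nonneg pi_pos.le hcosh) hRcos]
  · have hX1 : 1 ≤ X := not_lt.mp fun h => hin ⟨hX0, h⟩
    have hRcos : 0 ≤ R * Real.cos t := by linarith [hx.2]
    rw [clamp01_of_one_le hX1, mul_one, Real.cos_pi]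
    linarith [mul_nonneg (mul_nonneg pi_pos.le hcosh) hRcos]

lemma hasDerivAt_bumpConj_circle (t : ℝ) (h : x + R * Real.cos t ∉ ({0, 1} : Set ℝ)) :
    HasDerivAt (fun t => bumpConj (x + R * Real.cos t) (y + R * Real.sin t))
      (bumpConjAngularDeriv x y R t) t := by
  simp only [mem_insert_iff, mem_singleton_iff, not_or] at h
  exact hasDerivAt_bumpConj_comp (((Real.hasDerivAt_cos t).const_mul R).const_add x)
    (((Real.hasDerivAt_sin t).const_mul R).const_add y) h.1 h.2

lemma hasDerivAt_bump_ray (t : ℝ) (h : x + R * Real.cos t ∉ ({0, 1} : Set ℝ)) :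
    HasDerivAt (fun R => bump (x + R * Real.cos t) (y + R * Real.sin t))
      (bumpRadialDeriv x y R t) R := by
  simp only [mem_insert_iff, mem_singleton_iff, not_or] at h
  exact hasDerivAt_bump_comp ((hasDerivAt_mul_const (Real.cos t)).const_add x)
    ((hasDerivAt_mul_const (Real.sin t)).const_add y) h.1 h.2

lemma continuous_bumpConjAngularDeriv : Continuous (bumpConjAngularDeriv x y R) := by
  unfold bumpConjAngularDeriv
  fun_prop

lemma integral_bumpRadialDeriv_nonneg (hx : x ∈ Ioo 0 1) (hR : 0 < R)
    (hint : IntervalIntegrable (bumpRadialDeriv x y R) volume 0 (2 * π)) :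
    0 ≤ ∫ t in 0..2 * π, bumpRadialDeriv x y R t := by
  have hconj : ∫ t in 0..2 * π, bumpConjAngularDeriv x y R t = 0 := by
    rw [integral_eq_of_hasDerivAt_off_countable _ _
      (((countable_singleton 1).insert 0).preimage_add_mul_cos x hR.ne')
      (by unfold bumpConj; fun_prop) (fun t ht => hasDerivAt_bumpConj_circle t ht.2)
      (continuous_bumpConjAngularDeriv.intervalIntegrable _ _)]
    simp
  have hmono : ∫ t in 0..2 * π, bumpConjAngularDeriv x y R t ≤
      ∫ t in 0..2 * π, R * bumpRadialDeriv x y R t :=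
    integral_mono (by positivity) (continuous_bumpConjAngularDeriv.intervalIntegrable _ _)
      (hint.const_mul R) fun t => bumpConjAngularDeriv_le_mul_bumpRadialDeriv hx t
  rw [hconj, intervalIntegral.integral_const_mul] at hmono
  exact nonneg_of_mul_nonneg_right hmono hR

lemma lipschitzWith_ray (x y t : ℝ) :
    LipschitzWith 1 fun r : ℝ => (x + r * Real.cos t, y + r * Real.sin t) := by
  refine LipschitzWith.of_dist_le_mul fun r r' => ?_
  simp only [Prod.dist_eq, Real.dist_eq, NNReal.coe_one, one_mul, add_sub_add_left_eq_sub,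
    ← sub_mul, abs_mul]
  exact max_le (mul_le_of_le_one_right (abs_nonneg _) (Real.abs_cos_le_one t))
    (mul_le_of_le_one_right (abs_nonneg _) (Real.abs_sin_le_one t))

lemma hasDerivAt_integral_bump (x y : ℝ) (hR : 0 < R) :
    IntervalIntegrable (bumpRadialDeriv x y R) volume 0 (2 * π) ∧
      HasDerivAt (fun R => ∫ t in 0..2 * π, bump (x + R * Real.cos t) (y + R * Real.sin t))
        (∫ t in 0..2 * π, bumpRadialDeriv x y R t) R := by
  obtain ⟨K, hK⟩ :=
    locallyLipschitz_uncurry_bump.locallyLipschitzOn.exists_lipschitzOnWith_of_compact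
      (isCompact_closedBall (x, y) (R + 1))
  have hmaps (t : ℝ) : MapsTo (fun r : ℝ => (x + r * Real.cos t, y + r * Real.sin t))
      (Metric.ball R 1) (Metric.closedBall (x, y) (R + 1)) := fun r hr => by
    have h := (lipschitzWith_ray x y t).dist_le_mul r 0
    simp only [zero_mul, add_zero, NNReal.coe_one, one_mul, dist_zero_right, Real.norm_eq_abs] at h
    rw [Metric.mem_ball, Real.dist_eq] at hr
    exact Metric.mem_closedBall.mpr
      (h.trans (by linarith [abs_sub_abs_le_abs_sub r R, abs_of_pos hR]))
  have hlip : ∀ᵐ t, t ∈ Ι 0 (2 * π) → LipschitzOnWith (Real.nnabs K)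
      (fun r => bump (x + r * Real.cos t) (y + r * Real.sin t)) (Metric.ball R 1) :=
    ae_of_all _ fun t _ => by
      have h := hK.comp (lipschitzWith_ray x y t).lipschitzOnWith (hmaps t)
      rwa [mul_one, ← Real.nnabs_coe K] at h
  have hdiff : ∀ᵐ t, t ∈ Ι 0 (2 * π) →
      HasDerivAt (fun r => bump (x + r * Real.cos t) (y + r * Real.sin t))
        (bumpRadialDeriv x y R t) R := by
    filter_upwards [(((countable_singleton 1).insert 0).preimage_add_mul_cos x hR.ne').ae_notMem
      volume] with t ht _ using hasDerivAt_bump_ray t ht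
  have hmeas : Measurable (bumpRadialDeriv x y R) := by
    have : Measurable ((Ioo (0 : ℝ) 1).indicator (1 : ℝ → ℝ)) :=
      measurable_one.indicator measurableSet_Ioo
    unfold bumpRadialDeriv
    fun_prop
  have hcont (r : ℝ) : Continuous fun t => bump (x + r * Real.cos t) (y + r * Real.sin t) := by
    fun_prop
  exact intervalIntegral.hasDerivAt_integral_of_dominated_loc_of_lip
    (Metric.ball_mem_nhds R one_pos)
    (Eventually.of_forall fun r => (hcont r).aestronglyMeasurable)
    ((hcont R).intervalIntegrable _ _) hmeas.aestronglyMeasurable hlip intervalIntegrable_const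
    hdiff

lemma monotoneOn_integral_bump (hx : x ∈ Ioo 0 1) (y : ℝ) :
    MonotoneOn (fun R => ∫ t in 0..2 * π, bump (x + R * Real.cos t) (y + R * Real.sin t))
      (Ici 0) := by
  have hcont : Continuous fun R =>
      ∫ t in 0..2 * π, bump (x + R * Real.cos t) (y + R * Real.sin t) :=
    continuous_parametric_intervalIntegral_of_continuous' (by fun_prop) _ _
  refine monotoneOn_of_deriv_nonneg (convex_Ici 0) hcont.continuousOn (fun R hR => ?_)
    fun R hR => ?_
  all_goals rw [interior_Ici] at hR
  · exact (hasDerivAt_integral_bump x y hR).2.differentiableAt.differentiableWithinAt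
  · obtain ⟨hint, hderiv⟩ := hasDerivAt_integral_bump x y hR
    rw [hderiv.deriv]
    exact integral_bumpRadialDeriv_nonneg hx hR hint

lemma two_pi_mul_bump_le_integral (x y : ℝ) (hR : 0 ≤ R) :
    2 * π * bump x y ≤ ∫ t in 0..2 * π, bump (x + R * Real.cos t) (y + R * Real.sin t) := by
  by_cases hx : x ∈ Ioo 0 1
  · simpa using monotoneOn_integral_bump hx y self_mem_Ici hR hR
  · rw [bump_of_notMem hx, mul_zero]
    exact integral_nonneg (by positivity) fun t _ => bump_nonneg _ _

lemma bfun_zero_eq_bump (w : ℂ) : bfun 0 w = bump w.re w.im := by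
  unfold bfun bump
  split_ifs with hw
  · rw [zero_add] at hw
    rw [clamp01_of_mem (Ioo_subset_Icc_self hw), mul_comm, sub_zero,
      show π * (w.re - 1 / 2) = π * w.re - π / 2 by ring, Real.cos_sub_pi_div_two]
  · rw [zero_add] at hw
    rw [sin_pi_mul_clamp01_of_notMem hw, zero_mul]

lemma bfun_zero_add_mul_exp (z : ℂ) (r t : ℝ) :
    bfun 0 (z + r * Complex.exp (Complex.I * t)) =
      bump (z.re + r * Real.cos t) (z.im + r * Real.sin t) := by
  rw [bfun_zero_eq_bump, mul_comm Complex.I, Complex.exp_mul_I, ← Complex.ofReal_cos,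
    ← Complex.ofReal_sin]
  simp [- Complex.ofReal_cos, - Complex.ofReal_sin]

lemma subharmonic_bfun_zero : Subharmonic (bfun 0) := by
  refine ⟨?_, fun z r hr => ?_⟩
  · rw [funext bfun_zero_eq_bump]
    exact (by fun_prop : Continuous fun w : ℂ => bump w.re w.im).upperSemicontinuous
  · simp_rw [bfun_zero_add_mul_exp, bfun_zero_eq_bump]
    rw [one_div, ← div_eq_inv_mul, le_div_iff₀ (by positivity), mul_comm]
    exact two_pi_mul_bump_le_integral z.re z.im hr.le

end StripBump

lemma Subharmonic.comp_sub_const {u : ℂ → ℝ} (hu : Subharmonic u) (a : ℂ) :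
    Subharmonic fun w => u (w - a) :=
  ⟨hu.1.comp (continuous_sub_right a), fun z r hr => by
    simpa only [add_sub_right_comm] using hu.2 (z - a) r hr⟩

lemma bfun_eq_bfun_zero_sub (c : ℝ) : bfun c = fun w => bfun 0 (w - c) := by
  ext w
  simp only [bfun, Complex.sub_re, Complex.ofReal_re, Complex.sub_im, Complex.ofReal_im, sub_zero,
    zero_add, mem_Ioo, sub_pos, sub_lt_iff_lt_add']

theorem stmt_8 (c : ℝ) : Subharmonic (bfun c) := by
  rw [bfun_eq_bfun_zero_sub]
  exact StripBump.subharmonic_bfun_zero.comp_sub_const c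
end

section
/- Let f be a non-monomial entire function. For every r > 0, the set {z : |z| = r and |f(z)| = max_{|w|=r} |f(w)|} is finite. -/
/-!
Let `M = ‖f z₁‖` for some point `z₁` of the maximum modulus set on `‖z‖ = r`. If that set is
infinite it accumulates at some `z₀ ≠ 0`. Since `r² / conj z = z` on the circle, the function
`G z = f z * conj (f (r² / conj z))`, holomorphic on `ℂ ∖ {0}`, equals `‖f z‖² = M²` there, hence
everywhere by the identity theorem, i.e. `‖f z‖ * ‖f (r² / conj z)‖ = M²`. If `M = 0` then `f = 0`.
Otherwise `f` has no zeros off `0`, so `f = zⁿ u` with `u` entire and zero-free, and the same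
relation bounds `‖u z‖` for `‖z‖ > 1` by `M² / (r²ⁿ min_{‖w‖ ≤ r²} ‖u w‖)`. By Liouville `u` is
constant.
-/

open Complex ComplexConjugate Set Metric Bornology Topology

theorem Differentiable.exists_eq_pow_mul_of_forall_ne_zero {f : ℂ → ℂ} (hf : Differentiable ℂ f)
    (hf0 : ∀ z ≠ 0, f z ≠ 0) :
    ∃ (n : ℕ) (u : ℂ → ℂ), Differentiable ℂ u ∧ (∀ z, u z ≠ 0) ∧ ∀ z, f z = z ^ n * u z := by
  obtain ⟨p, hp⟩ := hf.analyticAt 0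
  have hp0 : p ≠ 0 := by
    rintro rfl
    obtain ⟨z, hz, hz0⟩ :=
      ((hp.eventually_eq_zero.filter_mono nhdsWithin_le_nhds).and
        (self_mem_nhdsWithin (s := {0}ᶜ))).exists
    exact hf0 z hz0 hz
  set u := (Function.swap dslope 0)^[p.order] f
  have hfu : ∀ z, f z = z ^ p.order * u z := by
    simpa using hp.eq_pow_order_mul_iterate_dslope
  have hu0 : ∀ z, u z ≠ 0 := by
    intro z
    rcases eq_or_ne z 0 with rfl | hz
    · exact hp.iterate_dslope_fslope_ne_zero hp0
    · exact right_ne_zero_of_mul (hfu z ▸ hf0 z hz)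
  refine ⟨p.order, u, fun z => ?_, hu0, hfu⟩
  rcases eq_or_ne z 0 with rfl | hz
  · exact (hp.has_fpower_series_iterate_dslope_fslope p.order).differentiableAt
  · have hev : (fun w => f w / w ^ p.order) =ᶠ[𝓝 z] u := by
      filter_upwards [eventually_ne_nhds hz] with w hw
      rw [hfu, mul_div_cancel_left₀ _ (pow_ne_zero _ hw)]
    exact ((hf z).div (differentiableAt_pow _) (pow_ne_zero _ hz)).congr_of_eventuallyEq hev.symm

lemma norm_ofReal_sq_div_conj (r : ℝ) (z : ℂ) : ‖(r : ℂ) ^ 2 / conj z‖ = r ^ 2 / ‖z‖ := by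
  simp

lemma ofReal_sq_div_eq_conj_of_norm_eq {r : ℝ} {z : ℂ} (hz : ‖z‖ = r) :
    (r : ℂ) ^ 2 / z = conj z := by
  rcases eq_or_ne z 0 with rfl | hz0
  · simp
  · rw [← hz, ← mul_conj', mul_div_cancel_left₀ _ hz0]

lemma isBounded_range_of_norm_mul_norm_inversion_eq {u : ℂ → ℂ} (hu : Continuous u)
    (hu0 : ∀ z, u z ≠ 0) {r K : ℝ} (h : ∀ z ≠ 0, ‖u z‖ * ‖u (r ^ 2 / conj z)‖ = K) :
    IsBounded (range u) := by
  obtain ⟨p, -, hmin⟩ := (isCompact_closedBall (0 : ℂ) (r ^ 2)).exists_isMinOn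
    (nonempty_closedBall.2 (sq_nonneg r)) hu.norm.continuousOn
  have hinner : IsBounded (u '' closedBall 0 1) :=
    ((isCompact_closedBall 0 1).image hu).isBounded
  have houter : IsBounded (u '' (closedBall 0 1)ᶜ) := by
    refine isBounded_iff_forall_norm_le.2 ⟨K / ‖u p‖, ?_⟩
    rintro _ ⟨z, hz, rfl⟩
    have hz1 : 1 < ‖z‖ := by simpa using hz
    have hz0 : z ≠ 0 := norm_pos_iff.1 (one_pos.trans hz1)
    have hmem : (r : ℂ) ^ 2 / conj z ∈ closedBall 0 (r ^ 2) := by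
      rw [mem_closedBall_zero_iff, norm_ofReal_sq_div_conj]
      exact div_le_self (sq_nonneg r) hz1.le
    rw [le_div_iff₀ (norm_pos_iff.2 (hu0 p)), ← h z hz0]
    exact mul_le_mul_of_nonneg_left (hmin hmem) (norm_nonneg _)
  rw [← image_univ, ← union_compl_self (closedBall 0 1), image_union]
  exact hinner.union houter

theorem Differentiable.exists_eq_mul_pow_of_norm_mul_norm_inversion_eq {f : ℂ → ℂ}
    (hf : Differentiable ℂ f) {r K : ℝ} (hr : r ≠ 0) (hK : K ≠ 0)
    (h : ∀ z ≠ 0, ‖f z‖ * ‖f (r ^ 2 / conj z)‖ = K) :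
    ∃ (c : ℂ) (n : ℕ), f = fun z => c * z ^ n := by
  have hf0 : ∀ z ≠ 0, f z ≠ 0 := fun z hz hfz => hK (by rw [← h z hz, hfz, norm_zero, zero_mul])
  obtain ⟨n, u, hu, hu0, hfu⟩ := hf.exists_eq_pow_mul_of_forall_ne_zero hf0
  have hrn : (r ^ 2) ^ n ≠ 0 := pow_ne_zero _ (pow_ne_zero _ hr)
  have hu_inv : ∀ z ≠ 0, ‖u z‖ * ‖u (r ^ 2 / conj z)‖ = K / (r ^ 2) ^ n := by
    intro z hz
    have hz' : ‖z‖ ≠ 0 := norm_ne_zero_iff.2 hz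
    rw [eq_div_iff hrn, ← h z hz, hfu, hfu, norm_mul, norm_mul, norm_pow, norm_pow,
      norm_ofReal_sq_div_conj, div_pow]
    field_simp
  obtain ⟨c, hc⟩ : ∃ c, ∀ z, u z = c :=
    ⟨u 0, fun z => hu.apply_eq_apply_of_bounded
      (isBounded_range_of_norm_mul_norm_inversion_eq hu.continuous hu0 hu_inv) z 0⟩
  exact ⟨c, n, funext fun z => by rw [hfu, hc, mul_comm]⟩

theorem Differentiable.norm_mul_norm_inversion_eq_of_frequently {f : ℂ → ℂ}
    (hf : Differentiable ℂ f) {r M : ℝ} {z₀ : ℂ} (hz₀ : z₀ ≠ 0)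
    (hfreq : ∃ᶠ z in 𝓝[≠] z₀, ‖z‖ = r ∧ ‖f z‖ = M) :
    ∀ z ≠ 0, ‖f z‖ * ‖f (r ^ 2 / conj z)‖ = M ^ 2 := by
  -- `G z = f z * conj (f (r ^ 2 / conj z))`, written so that it is visibly holomorphic.
  set G : ℂ → ℂ := fun z => f z * (conj ∘ f ∘ conj) (r ^ 2 / z)
  have hG : AnalyticOnNhd ℂ G {0}ᶜ := by
    refine DifferentiableOn.analyticOnNhd (fun z hz => ?_) isOpen_compl_singleton
    exact ((hf z).mul ((differentiableAt_conj_conj_iff.2 (hf _)).comp z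
      (differentiableAt_const _ |>.div differentiableAt_id hz))).differentiableWithinAt
  have hGM : EqOn G (fun _ => ((M ^ 2 : ℝ) : ℂ)) {0}ᶜ := by
    refine hG.eqOn_of_preconnected_of_frequently_eq analyticOnNhd_const
      (isConnected_compl_singleton_of_one_lt_rank (by simp) 0).isPreconnected hz₀
      (hfreq.mono fun z ⟨hzr, hfz⟩ => ?_)
    simp only [G, Function.comp_apply, ofReal_sq_div_eq_conj_of_norm_eq hzr, conj_conj, mul_conj',
      hfz]
    norm_cast
  intro z hz
  have := congrArg (‖·‖) (hGM hz)
  simpa [G, map_div₀] using this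

theorem stmt_16 (f : ℂ → ℂ) (hf : Differentiable ℂ f)
    (hmon : ¬ ∃ (c : ℂ) (n : ℕ), f = fun z => c * z ^ n) :
    ∀ r : ℝ, 0 < r →
      {z : ℂ | ‖z‖ = r ∧
        ∀ w : ℂ, ‖w‖ = r → ‖f w‖ ≤ ‖f z‖}.Finite := by
  intro r hr
  by_contra hS
  obtain ⟨z₀, hz₀, hacc⟩ := Set.Infinite.exists_accPt_of_subset_isCompact hS
    (isCompact_sphere (0 : ℂ) r) fun z hz => mem_sphere_zero_iff_norm.2 hz.1
  obtain ⟨z₁, hz₁⟩ := Set.Infinite.nonempty hS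
  have hfreq : ∃ᶠ z in 𝓝[≠] z₀, ‖z‖ = r ∧ ‖f z‖ = ‖f z₁‖ :=
    (accPt_iff_frequently_nhdsNE.1 hacc).mono fun z hz =>
      ⟨hz.1, le_antisymm (hz₁.2 z hz.1) (hz.2 z₁ hz₁.1)⟩
  have hz₀0 : z₀ ≠ 0 := ne_zero_of_mem_sphere hr.ne' ⟨z₀, hz₀⟩
  refine hmon ?_
  rcases eq_or_ne ‖f z₁‖ 0 with hM | hM
  · refine ⟨0, 0, ?_⟩
    simp only [zero_mul]
    exact AnalyticOnNhd.eq_of_frequently_eq (fun z _ => hf.analyticAt z) analyticOnNhd_const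
      (hfreq.mono fun z hz => by simpa [hM] using hz.2)
  · exact hf.exists_eq_mul_pow_of_norm_mul_norm_inversion_eq hr.ne' (pow_ne_zero 2 hM)
      (hf.norm_mul_norm_inversion_eq_of_frequently hz₀0 hfreq)
end
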